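/- On the Lie algebra rr₃,₀ with ω₀ = f¹² + f³⁴, the structures (ω₀, K₀₄) with K₀₄ = −E₁₁ + E₂₂ + E₃₃ − E₄₄ and (ω₀, K₀₁) with K₀₁ = −E₁₁ + E₂₂ − E₃₃ + E₄₄ are equivalent via the automorphism L with L f₁ = f₁, L f₂ = f₂, L f₃ = −f₄, L f₄ = f₃: L is a Lie algebra automorphism, L*ω₀ = ω₀, and L⁻¹ ∘ K₀₄ ∘ L = K₀₁. -/
import Mathlib

/-- The bracket of the Lie algebra `rr₃,₀` on `ℝ⁴` (0-indexed): only nonzero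
bracket `[f₀,f₁] = f₁`. -/
def brRR30 (u v : Fin 4 → ℝ) : Fin 4 → ℝ :=
  ![0, u 0 * v 1 - u 1 * v 0, 0, 0]

/-- The symplectic form `ω₀ = f¹² + f³⁴` (0-indexed: `f⁰¹ + f²³`). -/
def om0RR30 (u v : Fin 4 → ℝ) : ℝ :=
  u 0 * v 1 - u 1 * v 0 + (u 2 * v 3 - u 3 * v 2)

/-- `K₀₁ = −E₁₁ + E₂₂ − E₃₃ + E₄₄`. -/
def K01RR30 (u : Fin 4 → ℝ) : Fin 4 → ℝ := ![-u 0, u 1, -u 2, u 3]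

/-- `K₀₄ = −E₁₁ + E₂₂ + E₃₃ − E₄₄`. -/
def K04RR30 (u : Fin 4 → ℝ) : Fin 4 → ℝ := ![-u 0, u 1, u 2, -u 3]

/-- The map `L`: `f₁ ↦ f₁`, `f₂ ↦ f₂`, `f₃ ↦ −f₄`, `f₄ ↦ f₃`. -/
def LRR30 (u : Fin 4 → ℝ) : Fin 4 → ℝ := ![u 0, u 1, u 3, -u 2]

/-- On `rr₃,₀`, the structures `(ω₀, K₀₄)` and `(ω₀, K₀₁)` are equivalent via the
automorphism `L` with `Lf₃ = −f₄`, `Lf₄ = f₃`: `L` is a Lie algebra automorphism,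
preserves `ω₀`, and `L⁻¹ ∘ K₀₄ ∘ L = K₀₁`. -/
theorem stmt16 :
    Function.Bijective LRR30 ∧
    (∀ u v, LRR30 (brRR30 u v) = brRR30 (LRR30 u) (LRR30 v)) ∧
    (∀ u v, om0RR30 (LRR30 u) (LRR30 v) = om0RR30 u v) ∧
    (∀ u, K04RR30 (LRR30 u) = LRR30 (K01RR30 u)) := by
  refine ⟨?_, ?_, ?_, ?_⟩
  · have : Function.LeftInverse (fun u : Fin 4 → ℝ => ![u 0, u 1, -u 3, u 2]) LRR30 ∧
        Function.RightInverse (fun u : Fin 4 → ℝ => ![u 0, u 1, -u 3, u 2]) LRR30 := by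
      constructor <;> intro u <;> funext i <;> fin_cases i <;>
        simp [LRR30]
    exact ⟨this.1.injective, this.2.surjective⟩
  · intro u v; funext i; fin_cases i <;> simp [LRR30, brRR30]
  · intro u v; simp [LRR30, om0RR30]; ring
  · intro u; funext i; fin_cases i <;> simp [LRR30, K04RR30, K01RR30]
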